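/- Suppose a set I of BS-user pairs in a (G,K,M×N) cluster is such that every user appears in at most q pairs of I and every BS appears in at most Kq pairs of I (with 1 ≤ q ≤ G-1). If M ≥ 1, N ≥ K, and M + N ≥ K(q+1) + 1, then for every subset J ⊆ I the inequality |J_users|(M-1) + |J_BS|(N-K)K ≥ |J|K holds, where J_users and J_BS denote the sets of user indices and BS indices appearing in J. -/

import Mathlib

/-!
Each user carries at most `q` pairs of `J` and each BS at most `K q`, so
`|J| ≤ q |J_users|` and `|J| ≤ K q |J_BS|`. Splitting `K q ≤ (M - 1) + (N - K)` accordingly,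
`q K |J| ≤ |J| (M - 1) + |J| (N - K) ≤ q (|J_users| (M - 1) + K |J_BS| (N - K))`,
and cancelling `q` gives the claim.
-/

open Finset

theorem Finset.card_le_mul_card_image_of_subset {α β : Type*} [DecidableEq β] {I J : Finset α}
    (hJ : J ⊆ I) (f : α → β) (n : ℕ) (hn : ∀ b, #{a ∈ I | f a = b} ≤ n) :
    #J ≤ n * #(J.image f) :=
  card_le_mul_card_image J n fun b _ ↦ (card_le_card (filter_subset_filter _ hJ)).trans (hn b)

theorem Nat.mul_le_add_of_le_mul_of_le_mul {j x y m n q K : ℕ} (hx : j ≤ q * x)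
    (hy : j ≤ K * q * y) (hmn : K * q ≤ m + n) : j * K ≤ x * m + y * n * K := by
  rcases q.eq_zero_or_pos with rfl | hq
  · simp_all
  refine Nat.le_of_mul_le_mul_left ?_ hq
  calc q * (j * K) = K * q * j := by ring
    _ ≤ (m + n) * j := Nat.mul_le_mul_right j hmn
    _ = j * m + j * n := by ring
    _ ≤ q * x * m + K * q * y * n := by gcongr
    _ = q * (x * m + y * n * K) := by ring

theorem stmt0_general {BS User : Type*} [DecidableEq BS] [DecidableEq User]
    (K M N q : ℕ)
    (hMN : M + N ≥ K * (q + 1) + 1)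
    (I : Finset (BS × User))
    (huser : ∀ u : User, (I.filter (fun p => p.2 = u)).card ≤ q)
    (hbs : ∀ i : BS, (I.filter (fun p => p.1 = i)).card ≤ K * q) :
    ∀ J ⊆ I,
      (J.image Prod.snd).card * (M - 1) + (J.image Prod.fst).card * (N - K) * K
        ≥ J.card * K := by
  intro J hJ
  have hslack : K * q ≤ (M - 1) + (N - K) := by
    rw [Nat.mul_add, Nat.mul_one] at hMN
    omega
  exact Nat.mul_le_add_of_le_mul_of_le_mul (card_le_mul_card_image_of_subset hJ _ q huser)
    (card_le_mul_card_image_of_subset hJ _ (K * q) hbs) hslack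

/-- If every user appears in at most `q` pairs of `I` and every BS
appears in at most `K * q` pairs of `I`, with `1 ≤ q ≤ G - 1`, `M ≥ 1`, `N ≥ K`,
and `M + N ≥ K * (q + 1) + 1`, then for every `J ⊆ I`,
`|J_users| * (M - 1) + |J_BS| * (N - K) * K ≥ |J| * K`. -/
theorem stmt0 {BS User : Type*} [DecidableEq BS] [DecidableEq User]
    (G K M N q : ℕ) (hG : 0 < G) (hK : 0 < K) (hM1 : 1 ≤ M) (hNK : K ≤ N)
    (hq1 : 1 ≤ q) (hqG : q ≤ G - 1)
    (hMN : M + N ≥ K * (q + 1) + 1)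
    (I : Finset (BS × User))
    (huser : ∀ u : User, (I.filter (fun p => p.2 = u)).card ≤ q)
    (hbs : ∀ i : BS, (I.filter (fun p => p.1 = i)).card ≤ K * q) :
    ∀ J ⊆ I,
      (J.image Prod.snd).card * (M - 1) + (J.image Prod.fst).card * (N - K) * K
        ≥ J.card * K :=
  stmt0_general K M N q hMN I huser hbs
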